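/- Let G be a connected simple graph on a finite vertex set K with shortest-path distance d, let r ≥ 1, let p ≥ 1, let σ > 0, and let Φ_1, …, Φ_p be complex matrices indexed by K × K such that for each k, [Φ_k]_{ij} = 0 whenever i ≠ j and d(i,j) > r. Define Φ(z) := I − Σ_{k=1}^{p} z^k Φ_k and S(ω) := (2π/σ²) · Φ(e^{iω})ᵀ Φ(e^{−iω}) for ω ∈ [−π, π]. Then for every pair (i,j) with d(i,j) ≥ 2r + 1, the entry [S(ω)]_{ij} = 0 for all ω ∈ [−π, π]. -/

import Mathlib

/-!
Call a matrix `r`-banded if its `(i, j)` entry vanishes whenever `d(i, j) > r`. The identity and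
every `Φ_k` are `r`-banded, hence so is `Φ(z)` for every `z`; transposition preserves bandedness and,
by the triangle inequality for `d`, band widths add under multiplication. So `S(ω)` is `2r`-banded.
-/

open scoped Matrix

namespace SimpleGraph

variable {K : Type*} (G : SimpleGraph K) (R : Type*)

def bandedMatrices [Semiring R] (r : ℕ) : Submodule R (Matrix K K R) where
  carrier := {M | ∀ i j, r < G.dist i j → M i j = 0}
  add_mem' hA hB i j h := by simp [hA i j h, hB i j h]
  zero_mem' _ _ _ := rfl
  smul_mem' c _ hM i j h := by simp [hM i j h]

variable {G R}

theorem one_mem_bandedMatrices [Semiring R] [DecidableEq K] (r : ℕ) :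
    (1 : Matrix K K R) ∈ G.bandedMatrices R r := by
  intro i j h
  have hij : i ≠ j := by rintro rfl; simp at h
  exact Matrix.one_apply_ne hij

theorem transpose_mem_bandedMatrices [Semiring R] {r : ℕ} {M : Matrix K K R}
    (hM : M ∈ G.bandedMatrices R r) : Mᵀ ∈ G.bandedMatrices R r := by
  intro i j h
  exact hM j i (G.dist_comm ▸ h)

/-- Needs connectedness: `SimpleGraph.dist` is `0` between vertices in different components,
so the triangle inequality fails in general. -/
theorem Connected.mul_mem_bandedMatrices [Fintype K] [Semiring R] (hG : G.Connected) {r s : ℕ}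
    {A B : Matrix K K R} (hA : A ∈ G.bandedMatrices R r) (hB : B ∈ G.bandedMatrices R s) :
    A * B ∈ G.bandedMatrices R (r + s) := by
  intro i j h
  refine Finset.sum_eq_zero fun l _ => ?_
  dsimp only
  by_cases hil : r < G.dist i l
  · rw [hA i l hil, zero_mul]
  · have hlj : s < G.dist l j := by have := hG.dist_triangle (u := i) (v := l) (w := j); omega
    rw [hB l j hlj, mul_zero]

end SimpleGraph

open SimpleGraph in
theorem stmt_5_general {K : Type*} [Fintype K] [DecidableEq K]
    (G : SimpleGraph K) (hG : G.Connected)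
    (r p : ℕ) (σ : ℝ)
    (Φ : ℕ → Matrix K K ℂ)
    (hΦ : ∀ k ∈ Finset.Icc 1 p, ∀ i j, i ≠ j → r < G.dist i j → Φ k i j = 0)
    (Φpoly : ℂ → Matrix K K ℂ)
    (hΦpoly : ∀ z : ℂ,
      Φpoly z = (1 : Matrix K K ℂ) - ∑ k ∈ Finset.Icc 1 p, z ^ k • Φ k)
    (S : ℝ → Matrix K K ℂ)
    (hS : ∀ ω : ℝ, S ω = ((2 * Real.pi / σ ^ 2 : ℝ) : ℂ) •
      ((Φpoly (Complex.exp (Complex.I * (ω : ℂ))))ᵀ *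
        Φpoly (Complex.exp (-(Complex.I * (ω : ℂ)))))) :
    ∀ i j, 2 * r + 1 ≤ G.dist i j →
      ∀ ω ∈ Set.Icc (-Real.pi) Real.pi, S ω i j = 0 := by
  have hΦ_banded : ∀ k ∈ Finset.Icc 1 p, Φ k ∈ G.bandedMatrices ℂ r := fun k hk i j h =>
    hΦ k hk i j (by rintro rfl; simp at h) h
  have hΦpoly_banded : ∀ z, Φpoly z ∈ G.bandedMatrices ℂ r := fun z => by
    rw [hΦpoly]
    exact Submodule.sub_mem _ (one_mem_bandedMatrices r)
      (Submodule.sum_mem _ fun k hk => Submodule.smul_mem _ _ (hΦ_banded k hk))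
  have hS_banded : ∀ ω, S ω ∈ G.bandedMatrices ℂ (r + r) := fun ω => by
    rw [hS]
    exact Submodule.smul_mem _ _ <| hG.mul_mem_bandedMatrices
      (transpose_mem_bandedMatrices (hΦpoly_banded _)) (hΦpoly_banded _)
  intro i j hij ω _
  exact hS_banded ω i j (by omega)

/-- For a GNAR-type VAR whose coefficient matrices `Φ_k` satisfy
`[Φ_k]_{ij} = 0` whenever `i ≠ j` and `d(i,j) > r`, the inverse spectral
matrix `S(ω) = (2π/σ²) Φ(e^{iω})ᵀ Φ(e^{−iω})`, with
`Φ(z) = I − Σ_{k=1}^p z^k Φ_k`, satisfies `[S(ω)]_{ij} = 0` for all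
`ω ∈ [−π, π]` whenever `d(i,j) ≥ 2r + 1`. -/
theorem stmt_5 {K : Type*} [Fintype K] [DecidableEq K]
    (G : SimpleGraph K) (hG : G.Connected)
    (r p : ℕ) (hr : 1 ≤ r) (hp : 1 ≤ p) (σ : ℝ) (hσ : 0 < σ)
    (Φ : ℕ → Matrix K K ℂ)
    (hΦ : ∀ k ∈ Finset.Icc 1 p, ∀ i j, i ≠ j → r < G.dist i j → Φ k i j = 0)
    (Φpoly : ℂ → Matrix K K ℂ)
    (hΦpoly : ∀ z : ℂ,
      Φpoly z = (1 : Matrix K K ℂ) - ∑ k ∈ Finset.Icc 1 p, z ^ k • Φ k)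
    (S : ℝ → Matrix K K ℂ)
    (hS : ∀ ω : ℝ, S ω = ((2 * Real.pi / σ ^ 2 : ℝ) : ℂ) •
      ((Φpoly (Complex.exp (Complex.I * (ω : ℂ))))ᵀ *
        Φpoly (Complex.exp (-(Complex.I * (ω : ℂ)))))) :
    ∀ i j, 2 * r + 1 ≤ G.dist i j →
      ∀ ω ∈ Set.Icc (-Real.pi) Real.pi, S ω i j = 0 :=
  stmt_5_general G hG r p σ Φ hΦ Φpoly hΦpoly S hS
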